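/- Let R be a commutative local ring and s ∈ R (viewed as a constant power series in R[[x]]). Then K_s(R[[x]]) is quasipolar if and only if K_s(R) is quasipolar. -/

import Mathlib

/-- The generalized matrix ring `K_s(R)` with multiplier `s`. -/
@[ext]
structure GenMatrix (R : Type*) (s : R) where
  a : R
  b : R
  c : R
  d : R

namespace GenMatrix

variable {R : Type*} [Ring R] {s : R}

instance : Add (GenMatrix R s) :=
  ⟨fun X Y => ⟨X.a + Y.a, X.b + Y.b, X.c + Y.c, X.d + Y.d⟩⟩
instance : Neg (GenMatrix R s) := ⟨fun X => ⟨-X.a, -X.b, -X.c, -X.d⟩⟩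
instance : Zero (GenMatrix R s) := ⟨⟨0, 0, 0, 0⟩⟩
instance : One (GenMatrix R s) := ⟨⟨1, 0, 0, 1⟩⟩
instance : Mul (GenMatrix R s) :=
  ⟨fun X Y => ⟨X.a * Y.a + s * (X.b * Y.c), X.a * Y.b + X.b * Y.d,
    X.c * Y.a + X.d * Y.c, s * (X.c * Y.b) + X.d * Y.d⟩⟩

@[simp] lemma add_a (X Y : GenMatrix R s) : (X + Y).a = X.a + Y.a := rfl
@[simp] lemma add_b (X Y : GenMatrix R s) : (X + Y).b = X.b + Y.b := rfl
@[simp] lemma add_c (X Y : GenMatrix R s) : (X + Y).c = X.c + Y.c := rfl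
@[simp] lemma add_d (X Y : GenMatrix R s) : (X + Y).d = X.d + Y.d := rfl
@[simp] lemma neg_a (X : GenMatrix R s) : (-X).a = -X.a := rfl
@[simp] lemma neg_b (X : GenMatrix R s) : (-X).b = -X.b := rfl
@[simp] lemma neg_c (X : GenMatrix R s) : (-X).c = -X.c := rfl
@[simp] lemma neg_d (X : GenMatrix R s) : (-X).d = -X.d := rfl
@[simp] lemma zero_a : (0 : GenMatrix R s).a = 0 := rfl
@[simp] lemma zero_b : (0 : GenMatrix R s).b = 0 := rfl
@[simp] lemma zero_c : (0 : GenMatrix R s).c = 0 := rfl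
@[simp] lemma zero_d : (0 : GenMatrix R s).d = 0 := rfl
@[simp] lemma one_a : (1 : GenMatrix R s).a = 1 := rfl
@[simp] lemma one_b : (1 : GenMatrix R s).b = 0 := rfl
@[simp] lemma one_c : (1 : GenMatrix R s).c = 0 := rfl
@[simp] lemma one_d : (1 : GenMatrix R s).d = 1 := rfl
@[simp] lemma mul_a (X Y : GenMatrix R s) : (X * Y).a = X.a * Y.a + s * (X.b * Y.c) := rfl
@[simp] lemma mul_b (X Y : GenMatrix R s) : (X * Y).b = X.a * Y.b + X.b * Y.d := rfl
@[simp] lemma mul_c (X Y : GenMatrix R s) : (X * Y).c = X.c * Y.a + X.d * Y.c := rfl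
@[simp] lemma mul_d (X Y : GenMatrix R s) : (X * Y).d = s * (X.c * Y.b) + X.d * Y.d := rfl

instance : AddCommGroup (GenMatrix R s) where
  add_assoc X Y Z := by ext <;> simp [add_assoc]
  zero_add X := by ext <;> simp
  add_zero X := by ext <;> simp
  add_comm X Y := by ext <;> simp [add_comm]
  neg_add_cancel X := by ext <;> simp
  nsmul := nsmulRec
  zsmul := zsmulRec

section Central

variable [Fact (s ∈ Set.center R)]

lemma scomm (r : R) : r * s = s * r := Semigroup.mem_center_iff.mp Fact.out r

lemma sshift (r t : R) : r * (s * t) = s * (r * t) := by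
  rw [← mul_assoc, scomm (s := s), mul_assoc]

instance : Ring (GenMatrix R s) where
  __ := (inferInstance : AddCommGroup (GenMatrix R s))
  left_distrib X Y Z := by ext <;> simp [mul_add, add_mul] <;> abel
  right_distrib X Y Z := by ext <;> simp [mul_add, add_mul] <;> abel
  zero_mul X := by ext <;> simp
  mul_zero X := by ext <;> simp
  mul_assoc X Y Z := by
    ext <;> simp only [mul_a, mul_b, mul_c, mul_d, mul_add, add_mul, mul_assoc, sshift] <;> abel
  one_mul X := by ext <;> simp
  mul_one X := by ext <;> simp

end Central

instance central_of_comm {R : Type*} [CommRing R] (s : R) : Fact (s ∈ Set.center R) :=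
  ⟨by rw [Set.center_eq_univ]; trivial⟩

/-- `det_s` of a generalized matrix over a commutative ring. -/
def dets {R : Type*} {s : R} [CommRing R] (A : GenMatrix R s) : R :=
  A.a * A.d - s * (A.b * A.c)

/-- The trace of a generalized matrix. -/
def tr {R : Type*} {s : R} [Ring R] (A : GenMatrix R s) : R := A.a + A.d

end GenMatrix

/-- An element `a` is quasinilpotent if `1 + a*x` is a unit for every `x` commuting with `a`. -/
def IsQuasinilpotent {R : Type*} [Ring R] (a : R) : Prop :=
  ∀ x : R, a * x = x * a → IsUnit (1 + a * x)

/-- An element `a` is quasipolar if there is an idempotent `p` in the double commutant of `a`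
with `a + p` a unit and `a * p` quasinilpotent. -/
def IsQuasipolar {R : Type*} [Ring R] (a : R) : Prop :=
  ∃ p : R, IsIdempotentElem p ∧ (∀ y : R, y * a = a * y → p * y = y * p) ∧
    IsUnit (a + p) ∧ IsQuasinilpotent (a * p)

/-- A ring is quasipolar if every element is quasipolar. -/
def IsQuasipolarRing (R : Type*) [Ring R] : Prop := ∀ a : R, IsQuasipolar a

/-- An element is strongly clean if it is the sum of an idempotent and a unit that commute. -/
def IsStronglyClean {R : Type*} [Ring R] (a : R) : Prop :=
  ∃ e u : R, IsIdempotentElem e ∧ IsUnit u ∧ a = e + u ∧ e * u = u * e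

/-- A ring is strongly clean if every element is strongly clean. -/
def IsStronglyCleanRing (R : Type*) [Ring R] : Prop := ∀ a : R, IsStronglyClean a

/-- `a` is similar to `b` if `b = u⁻¹ * a * u` for some unit `u`. -/
def IsSimilar {R : Type*} [Ring R] (a b : R) : Prop :=
  ∃ u : Rˣ, b = ↑u⁻¹ * a * ↑u

/-- The Jacobson radical of a ring: the intersection of all maximal left ideals. -/
def JacobsonRadical (R : Type*) [Ring R] : Ideal R := Ideal.jacobson ⊥

/-!
Over a commutative local ring `S`, quasipolarity of `A ∈ K_s(S)` is decided by `tr A` and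
`dets A`. If `dets A` is a unit, `A` is a unit; if neither is a unit, `A` is quasinilpotent. If
`tr A` is a unit but `dets A` is not, the only candidate idempotent is one with `tr p = 1` and
`dets p = 0`, which splits `A = α p + β (1 - p)`; hence `A` is quasipolar exactly when
`x² - tr A x + dets A` has a unit root `β`, the other root `α = tr A - β` being a nonunit.

Such a root is simple modulo the maximal ideal, so it lifts from `R` to the `X`-adically
complete, hence Henselian, ring `R⟦X⟧`; in the other direction constant coefficients carry
roots down from `R⟦X⟧` to `R`.
-/

section Quasipolar

variable {R : Type*} [Ring R] {a : R}

lemma IsUnit.isQuasipolar (h : IsUnit a) : IsQuasipolar a :=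
  ⟨0, .zero, fun _ _ => by simp, by simpa using h, fun _ _ => by simp⟩

lemma IsQuasinilpotent.isQuasipolar (h : IsQuasinilpotent a) : IsQuasipolar a :=
  ⟨1, .one, fun _ _ => by simp, by simpa [add_comm] using h 1 (by simp), by simpa using h⟩

end Quasipolar

namespace IsLocalRing

variable {R : Type*} [CommRing R] [IsLocalRing R] {u x : R}

lemma eq_zero_or_eq_one_of_isIdempotentElem (hx : IsIdempotentElem x) : x = 0 ∨ x = 1 := by
  rcases isUnit_or_isUnit_one_sub_self x with h | h
  · exact .inr ((IsIdempotentElem.iff_eq_one_of_isUnit h).mp hx)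
  · exact .inl (sub_eq_self.mp ((IsIdempotentElem.iff_eq_one_of_isUnit h).mp hx.one_sub))

lemma isUnit_add_of_not_isUnit (hu : IsUnit u) (hx : ¬IsUnit x) : IsUnit (u + x) := by
  rw [← notMem_maximalIdeal] at hu ⊢
  rwa [Ideal.add_mem_iff_left _ ((mem_maximalIdeal x).mpr hx)]

lemma isUnit_sub_of_not_isUnit (hu : IsUnit u) (hx : ¬IsUnit x) : IsUnit (u - x) := by
  rw [sub_eq_add_neg]
  exact isUnit_add_of_not_isUnit hu (by rwa [IsUnit.neg_iff])

end IsLocalRing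

lemma not_isUnit_sub_of_sq_sub_mul_add_eq_zero {R : Type*} [CommRing R] {t d b : R}
    (hb : IsUnit b) (hd : ¬IsUnit d) (h : b ^ 2 - t * b + d = 0) : ¬IsUnit (t - b) :=
  fun hu => hd (by rw [show d = (t - b) * b by linear_combination h]; exact hu.mul hb)

namespace GenMatrix

variable {S : Type*} [CommRing S] {s : S} {A X p : GenMatrix S s}

@[simp] lemma sub_a (X Y : GenMatrix S s) : (X - Y).a = X.a - Y.a := by simp [sub_eq_add_neg]
@[simp] lemma sub_b (X Y : GenMatrix S s) : (X - Y).b = X.b - Y.b := by simp [sub_eq_add_neg]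
@[simp] lemma sub_c (X Y : GenMatrix S s) : (X - Y).c = X.c - Y.c := by simp [sub_eq_add_neg]
@[simp] lemma sub_d (X Y : GenMatrix S s) : (X - Y).d = X.d - Y.d := by simp [sub_eq_add_neg]

def scalar : S →+* GenMatrix S s where
  toFun c := ⟨c, 0, 0, c⟩
  map_one' := rfl
  map_mul' _ _ := by ext <;> simp
  map_zero' := rfl
  map_add' _ _ := by ext <;> simp

instance : Algebra S (GenMatrix S s) :=
  scalar.toAlgebra' fun c X => by ext <;> simp [scalar] <;> ring

@[simp] lemma algebraMap_apply (c : S) : algebraMap S (GenMatrix S s) c = ⟨c, 0, 0, c⟩ := rfl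

@[simp] lemma smul_a (c : S) (X : GenMatrix S s) : (c • X).a = c * X.a := by
  simp [Algebra.smul_def]
@[simp] lemma smul_b (c : S) (X : GenMatrix S s) : (c • X).b = c * X.b := by
  simp [Algebra.smul_def]
@[simp] lemma smul_c (c : S) (X : GenMatrix S s) : (c • X).c = c * X.c := by
  simp [Algebra.smul_def]
@[simp] lemma smul_d (c : S) (X : GenMatrix S s) : (c • X).d = c * X.d := by
  simp [Algebra.smul_def]

@[simp] lemma tr_add (X Y : GenMatrix S s) : tr (X + Y) = tr X + tr Y := by simp [tr]; ring
@[simp] lemma tr_sub (X Y : GenMatrix S s) : tr (X - Y) = tr X - tr Y := by simp [tr]; ring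
@[simp] lemma tr_smul (c : S) (X : GenMatrix S s) : tr (c • X) = c * tr X := by simp [tr]; ring
@[simp] lemma tr_one : tr (1 : GenMatrix S s) = 2 := by simp [tr]; norm_num

lemma dets_mul (X Y : GenMatrix S s) : dets (X * Y) = dets X * dets Y := by simp [dets]; ring
@[simp] lemma dets_one : dets (1 : GenMatrix S s) = 1 := by simp [dets]
@[simp] lemma dets_smul (c : S) (X : GenMatrix S s) : dets (c • X) = c ^ 2 * dets X := by
  simp [dets]; ring

lemma dets_one_add (X : GenMatrix S s) : dets (1 + X) = 1 + tr X + dets X := by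
  simp [dets, tr]; ring

lemma mul_self_eq_tr_smul_sub (X : GenMatrix S s) : X * X = tr X • X - dets X • 1 := by
  ext <;> simp [tr, dets] <;> ring

lemma mul_add_mul_swap (X Y : GenMatrix S s) :
    X * Y + Y * X = tr X • Y + tr Y • X - (tr X * tr Y - tr (X * Y)) • 1 := by
  ext <;> simp [tr] <;> ring

lemma tr_mul_self (X : GenMatrix S s) : tr (X * X) = tr X ^ 2 - 2 * dets X := by
  rw [mul_self_eq_tr_smul_sub]; simp; ring

def adj (X : GenMatrix S s) : GenMatrix S s := ⟨X.d, -X.b, -X.c, X.a⟩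

lemma mul_adj (X : GenMatrix S s) : X * adj X = dets X • 1 := by
  ext <;> simp [adj, dets] <;> ring

lemma adj_mul (X : GenMatrix S s) : adj X * X = dets X • 1 := by
  ext <;> simp [adj, dets] <;> ring

lemma isUnit_iff_isUnit_dets : IsUnit A ↔ IsUnit (dets A) := by
  constructor
  · rintro ⟨u, rfl⟩
    exact .of_mul_eq_one (dets (↑u⁻¹ : GenMatrix S s))
      (by rw [← dets_mul, u.mul_inv, dets_one])
  · intro h
    refine isUnit_iff_exists.mpr ⟨(↑h.unit⁻¹ : S) • adj A, ?_, ?_⟩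
    · rw [mul_smul_comm, mul_adj, smul_smul, h.val_inv_mul, one_smul]
    · rw [smul_mul_assoc, adj_mul, smul_smul, h.val_inv_mul, one_smul]

lemma tr_smul_add_smul_one_sub (htr : tr p = 1) (a b : S) :
    tr (a • p + b • (1 - p)) = a + b := by
  simp [htr]; ring

lemma dets_smul_add_smul_one_sub (htr : tr p = 1) (hdet : dets p = 0) (a b : S) :
    dets (a • p + b • (1 - p)) = a * b := by
  simp only [tr, dets] at htr hdet
  simp [dets]
  linear_combination (a - b) ^ 2 * hdet + b * (a - b) * htr

lemma mul_eq_tr_smul (hp : IsIdempotentElem p) (hA : Commute A p) (htr : tr p = 1) :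
    A * p = tr (A * p) • p := by
  have hXp : A * p * p = A * p := by rw [mul_assoc, hp.eq]
  have hpX : p * (A * p) = A * p := by rw [← mul_assoc, ← hA.eq, hXp]
  have key := mul_add_mul_swap (A * p) p
  rw [hXp, hpX, htr, mul_one, sub_self, zero_smul, sub_zero, one_smul] at key
  exact add_left_cancel (key.trans (add_comm _ _))

lemma eq_smul_add_smul_one_sub (hp : IsIdempotentElem p) (hA : Commute A p) (htr : tr p = 1) :
    A = tr (A * p) • p + tr (A * (1 - p)) • (1 - p) := by
  have htr' : tr (1 - p) = 1 := by simp [htr]; norm_num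
  rw [← mul_eq_tr_smul hp hA htr,
    ← mul_eq_tr_smul hp.one_sub ((Commute.one_right A).sub_right hA) htr', ← mul_add,
    add_sub_cancel, mul_one]

lemma dets_sub_smul_one (X : GenMatrix S s) (c : S) :
    dets (X - c • 1) = c ^ 2 - tr X * c + dets X := by
  simp [dets, tr]; ring

section Map

variable {T : Type*} [CommRing T] {t : T}

/-- The multiplier `t` of the target is left free, so that `constantCoeff` can land in
`GenMatrix R s` although `constantCoeff (C s) = s` holds only propositionally. -/
def map (f : S →+* T) (A : GenMatrix S s) : GenMatrix T t := ⟨f A.a, f A.b, f A.c, f A.d⟩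

@[simp] lemma tr_map (f : S →+* T) (A : GenMatrix S s) :
    tr (A.map f : GenMatrix T t) = f (tr A) := by
  simp [map, tr]

lemma dets_map (f : S →+* T) (hf : f s = t) (A : GenMatrix S s) :
    dets (A.map f : GenMatrix T t) = f (dets A) := by
  simp [map, dets, hf]

end Map

section IsLocalRing

open IsLocalRing

variable [IsLocalRing S]

lemma isUnit_one_add_of_not_isUnit (ht : ¬IsUnit (tr X)) (hd : ¬IsUnit (dets X)) :
    IsUnit (1 + X) := by
  rw [isUnit_iff_isUnit_dets, dets_one_add, add_assoc]
  exact isUnit_add_of_not_isUnit isUnit_one (nonunits_add ht hd)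

theorem isQuasinilpotent_iff : IsQuasinilpotent A ↔ ¬IsUnit (tr A) ∧ ¬IsUnit (dets A) := by
  constructor
  · intro hA
    have hd : ¬IsUnit (dets A) := by
      intro hd
      obtain ⟨u, rfl⟩ := isUnit_iff_isUnit_dets.mpr hd
      have h := hA (-↑u⁻¹) (by simp)
      rw [mul_neg, u.mul_inv, add_neg_cancel, isUnit_zero_iff] at h
      exact zero_ne_one (congrArg GenMatrix.a h)
    refine ⟨fun ht => hd ?_, hd⟩
    set c : S := -↑ht.unit⁻¹
    have h := hA (c • 1) (by simp)
    rw [mul_smul_comm, mul_one, isUnit_iff_isUnit_dets, dets_one_add, tr_smul, dets_smul,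
      show 1 + c * tr A = 0 by simp [c], zero_add] at h
    exact (IsUnit.mul_iff.mp h).2
  · rintro ⟨ht, hd⟩ Y hY
    -- `(AY)² = A²Y²` and Cayley–Hamilton for `A` put `tr (AY) ^ 2` in the maximal ideal.
    have hsq : A * Y * (A * Y) = tr A • (A * (Y * Y)) - dets A • (Y * Y) := by
      rw [mul_assoc, ← mul_assoc Y, ← hY, mul_assoc, ← mul_assoc A A, mul_self_eq_tr_smul_sub,
        sub_mul, smul_mul_assoc, smul_mul_assoc, one_mul]
    have hdY : ¬IsUnit (dets (A * Y)) := by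
      rw [dets_mul]; exact fun h => hd (IsUnit.mul_iff.mp h).1
    have htY : tr (A * Y) ^ 2 =
        tr A * tr (A * (Y * Y)) - dets A * tr (Y * Y) + 2 * dets (A * Y) := by
      have := tr_mul_self (A * Y)
      rw [hsq, tr_sub, tr_smul, tr_smul] at this
      linear_combination -this
    have hm : tr (A * Y) ^ 2 ∈ maximalIdeal S := by
      rw [htY]
      refine add_mem (sub_mem (Ideal.mul_mem_right _ _ ?_) (Ideal.mul_mem_right _ _ ?_))
        (Ideal.mul_mem_left _ _ ?_)
      exacts [(mem_maximalIdeal _).mpr ht, (mem_maximalIdeal _).mpr hd,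
        (mem_maximalIdeal _).mpr hdY]
    exact isUnit_one_add_of_not_isUnit (fun h => (mem_maximalIdeal _).mp hm (h.pow 2)) hdY

lemma eq_zero_or_eq_one_or_of_isIdempotentElem (hp : IsIdempotentElem p) :
    p = 0 ∨ p = 1 ∨ tr p = 1 ∧ dets p = 0 := by
  have hdp : IsIdempotentElem (dets p) := by rw [IsIdempotentElem, ← dets_mul, hp.eq]
  rcases eq_zero_or_eq_one_of_isIdempotentElem hdp with hd | hd
  · have hch : p = tr p • p := by
      simpa [hd] using (mul_self_eq_tr_smul_sub p).symm.trans hp.eq |>.symm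
    have htp : IsIdempotentElem (tr p) := by
      have := congrArg tr hch
      rw [tr_smul] at this
      exact this.symm
    rcases eq_zero_or_eq_one_of_isIdempotentElem htp with ht | ht
    · exact .inl (by rw [hch, ht, zero_smul])
    · exact .inr (.inr ⟨ht, hd⟩)
  · exact .inr (.inl ((IsIdempotentElem.iff_eq_one_of_isUnit
      (isUnit_iff_isUnit_dets.mpr (hd ▸ isUnit_one))).mp hp))

theorem isQuasipolar_of_eq_smul_add_smul {α β : S} (hp : IsIdempotentElem p) (htr : tr p = 1)
    (hdet : dets p = 0) (hA : A = α • p + β • (1 - p)) (hα : ¬IsUnit α) (hβ : IsUnit β) :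
    IsQuasipolar A := by
  have hAp : A * p = α • p := by
    rw [hA, add_mul, smul_mul_assoc, smul_mul_assoc, hp.eq, sub_mul, one_mul, hp.eq, sub_self,
      smul_zero, add_zero]
  refine ⟨p, hp, fun y hy => ?_, ?_, ?_⟩
  · have hscale : A - β • 1 = (α - β) • p := by rw [hA]; module
    have : (α - β) • (p * y) = (α - β) • (y * p) := by
      rw [← smul_mul_assoc, ← hscale, ← mul_smul_comm, ← hscale, sub_mul, mul_sub, hy,
        smul_mul_assoc, one_mul, mul_smul_comm, mul_one]
    exact ((isUnit_sub_of_not_isUnit hβ hα).neg.smul_left_cancel).mp (by rwa [neg_sub])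
  · have : A + p = (α + 1) • p + β • (1 - p) := by rw [hA]; module
    rw [this, isUnit_iff_isUnit_dets, dets_smul_add_smul_one_sub htr hdet, add_comm]
    exact (isUnit_add_of_not_isUnit isUnit_one hα).mul hβ
  · rw [hAp, isQuasinilpotent_iff, tr_smul, dets_smul, htr, hdet, mul_one, mul_zero]
    exact ⟨hα, not_isUnit_zero⟩

theorem exists_isUnit_root_of_isQuasipolar (hA : IsQuasipolar A) (ht : IsUnit (tr A))
    (hd : ¬IsUnit (dets A)) : ∃ β : S, IsUnit β ∧ β ^ 2 - tr A * β + dets A = 0 := by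
  obtain ⟨p, hp, hcomm, hunit, hqn⟩ := hA
  rcases eq_zero_or_eq_one_or_of_isIdempotentElem hp with rfl | rfl | ⟨htr, hdet⟩
  · rw [add_zero, isUnit_iff_isUnit_dets] at hunit
    exact absurd hunit hd
  · rw [mul_one, isQuasinilpotent_iff] at hqn
    exact absurd ht hqn.1
  obtain ⟨α, β, rfl⟩ : ∃ α β : S, A = α • p + β • (1 - p) :=
    ⟨_, _, eq_smul_add_smul_one_sub hp (hcomm A rfl).symm htr⟩
  have : α • p + β • (1 - p) + p = (α + 1) • p + β • (1 - p) := by module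
  rw [this, isUnit_iff_isUnit_dets, dets_smul_add_smul_one_sub htr hdet] at hunit
  refine ⟨β, (IsUnit.mul_iff.mp hunit).2, ?_⟩
  rw [tr_smul_add_smul_one_sub htr, dets_smul_add_smul_one_sub htr hdet]
  ring

theorem isQuasipolar_of_isUnit_root {β : S} (hβ : IsUnit β) (hd : ¬IsUnit (dets A))
    (hroot : β ^ 2 - tr A * β + dets A = 0) : IsQuasipolar A := by
  set α := tr A - β
  have hα : ¬IsUnit α := not_isUnit_sub_of_sq_sub_mul_add_eq_zero hβ hd hroot
  have hw : IsUnit (α - β) := by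
    rw [← neg_sub]; exact (isUnit_sub_of_not_isUnit hβ hα).neg
  -- the spectral idempotent `(A - β) / (α - β)` of the eigenvalue `α`
  set p := (↑hw.unit⁻¹ : S) • (A - β • 1)
  have hscale : (α - β) • p = A - β • 1 := by rw [smul_smul, hw.mul_val_inv, one_smul]
  have htr : tr p = 1 := by
    rw [tr_smul, tr_sub, tr_smul, tr_one, show tr A - β * 2 = α - β by ring, hw.val_inv_mul]
  have hdet : dets p = 0 := by rw [dets_smul, dets_sub_smul_one, hroot, mul_zero]
  have hp : IsIdempotentElem p := by
    rw [IsIdempotentElem, mul_self_eq_tr_smul_sub, htr, hdet, one_smul, zero_smul, sub_zero]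
  refine isQuasipolar_of_eq_smul_add_smul hp htr hdet ?_ hα hβ
  linear_combination (norm := module) -hscale

theorem isQuasipolar_iff : IsQuasipolar A ↔ (IsUnit (tr A) → ¬IsUnit (dets A) →
    ∃ β : S, IsUnit β ∧ β ^ 2 - tr A * β + dets A = 0) := by
  refine ⟨exists_isUnit_root_of_isQuasipolar, fun h => ?_⟩
  by_cases hd : IsUnit (dets A)
  · exact (isUnit_iff_isUnit_dets.mpr hd).isQuasipolar
  by_cases ht : IsUnit (tr A)
  · obtain ⟨β, hβ, hroot⟩ := h ht hd
    exact isQuasipolar_of_isUnit_root hβ hd hroot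
  · exact (isQuasinilpotent_iff.mpr ⟨ht, hd⟩).isQuasipolar

end IsLocalRing

end GenMatrix

open Polynomial in
theorem HenselianRing.exists_sq_sub_mul_add_eq_zero {S : Type*} [CommRing S] {I : Ideal S}
    [HenselianRing S I] {t d b₀ : S} (h₀ : b₀ ^ 2 - t * b₀ + d ∈ I)
    (hu : IsUnit (Ideal.Quotient.mk I (2 * b₀ - t))) :
    ∃ b, b ^ 2 - t * b + d = 0 ∧ b - b₀ ∈ I := by
  have hf : (X ^ 2 - C t * X + C d : S[X]).Monic := by monicity!
  obtain ⟨b, hb, hbb₀⟩ := HenselianRing.is_henselian _ hf b₀ (by simpa using h₀)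
    (by simpa [one_add_one_eq_two, map_ofNat] using hu)
  exact ⟨b, by simpa using hb, hbb₀⟩

namespace PowerSeries

variable {R : Type*} [CommRing R] [IsLocalRing R]

theorem exists_isUnit_root_of_constantCoeff {t d : R⟦X⟧} {b₀ : R} (hb₀ : IsUnit b₀)
    (hd : ¬IsUnit (constantCoeff d))
    (h₀ : b₀ ^ 2 - constantCoeff t * b₀ + constantCoeff d = 0) :
    ∃ b, IsUnit b ∧ b ^ 2 - t * b + d = 0 := by
  have hu : IsUnit (2 * b₀ - constantCoeff t) := by
    rw [show 2 * b₀ - constantCoeff t = b₀ - (constantCoeff t - b₀) by ring]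
    exact IsLocalRing.isUnit_sub_of_not_isUnit hb₀
      (not_isUnit_sub_of_sq_sub_mul_add_eq_zero hb₀ hd h₀)
  obtain ⟨b, hb, hbb₀⟩ := HenselianRing.exists_sq_sub_mul_add_eq_zero (I := Ideal.span {X})
    (t := t) (d := d) (b₀ := C b₀)
    (by rw [Ideal.mem_span_singleton, X_dvd_iff]; simpa using h₀)
    ((isUnit_iff_constantCoeff.mpr (by simpa [map_ofNat] using hu)).map _)
  rw [Ideal.mem_span_singleton, X_dvd_iff, map_sub, constantCoeff_C, sub_eq_zero] at hbb₀
  exact ⟨b, isUnit_iff_constantCoeff.mpr (hbb₀ ▸ hb₀), hb⟩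

end PowerSeries

open GenMatrix PowerSeries in
/-- for a commutative local ring `R` and `s ∈ R` viewed as a constant power
series, `K_s(R[[x]])` is quasipolar iff `K_s(R)` is quasipolar. -/
theorem genMatrix_powerSeries_const_isQuasipolarRing_iff {R : Type*} [CommRing R]
    [IsLocalRing R] (s : R) :
    IsQuasipolarRing (GenMatrix (PowerSeries R) (PowerSeries.C s)) ↔
      IsQuasipolarRing (GenMatrix R s) := by
  simp only [IsQuasipolarRing, isQuasipolar_iff]
  constructor
  · intro H A ht hd
    obtain ⟨β, hβ, hroot⟩ := H (A.map C) (by simpa using ht.map C)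
      (by rwa [dets_map (s := s) C rfl, isUnit_iff_constantCoeff, constantCoeff_C])
    exact ⟨constantCoeff β, hβ.map _, by simpa [dets_map] using congrArg constantCoeff hroot⟩
  · intro H A ht hd
    rw [isUnit_iff_constantCoeff] at ht hd
    obtain ⟨b₀, hb₀, h₀⟩ := H (A.map constantCoeff) (by rwa [tr_map])
      (by rwa [dets_map _ (constantCoeff_C s)])
    rw [tr_map, dets_map _ (constantCoeff_C s)] at h₀
    exact exists_isUnit_root_of_constantCoeff hb₀ hd h₀
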